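/- Under the stationary two-sequence k-mer model, for any position i ∈ {1,…,n−k+1} and any word W = w₁…w_k ∈ [L]^k, with Z_i^W = X_{1,i}^W − X_{2,i}^W (the difference of the indicators that W occurs in S₁, respectively S₂, starting at position i), one has Var[ Z_i^W ] = E[ (Z_i^W)² ] = π^W·( 2 − ∏_{j=1}^k M(w_j, w_j) − ∏_{j=1}^k N(w_j, w_j) ), where N = diag(π)^{-1} (diag(π) M)^T. -/

import Mathlib

open Finset Matrix

/-!
`Z = X₁ - X₂`, where `X₁`, `X₂` indicate that `W` sits in `S₁`, resp. `S₂`, on the window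
starting at `i`. Under the product law of the site pairs, the probability of any event on that
window factorizes over its `k` sites. The first marginal of a site pair is `π` because `M` is
stochastic, the second is `π` because `π` is stationary, so `E X₁ = E X₂ = π^W` and `E Z = 0`.
Since `Z² = X₁ + X₂ - 2 X₁ X₂` and `E[X₁ X₂] = ∏ π(w_j) M(w_j, w_j)`, it remains to note that
`N` and `M` have the same diagonal: conjugating by `diag(π)` does not change diagonal entries.
-/

section ProductWeight

variable {ι κ α R : Type*} [Fintype ι] [DecidableEq ι] [Fintype κ] [Fintype α] [CommSemiring R]
  {p : α → R}

theorem sum_prod_mul_prod_finset (hp : ∑ x, p x = 1) (s : Finset ι)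
    (G : ι → α → R) :
    ∑ ω : ι → α, (∏ m, p (ω m)) * ∏ m ∈ s, G m (ω m) = ∏ m ∈ s, ∑ x, p x * G m x := by
  calc ∑ ω : ι → α, (∏ m, p (ω m)) * ∏ m ∈ s, G m (ω m)
      = ∑ ω : ι → α, ∏ m, p (ω m) * (if m ∈ s then G m (ω m) else 1) := by
        refine sum_congr rfl fun ω _ => ?_
        rw [prod_mul_distrib, Fintype.prod_ite_mem]
    _ = ∏ m, ∑ x, p x * (if m ∈ s then G m x else 1) :=
        (Fintype.prod_sum fun m x => p x * if m ∈ s then G m x else 1).symm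
    _ = ∏ m ∈ s, ∑ x, p x * G m x := by
        simp only [← Fintype.prod_ite_mem s]
        refine Fintype.prod_congr _ _ fun m => ?_
        split_ifs <;> simp [hp]

theorem sum_prod_mul_prod_embedding (hp : ∑ x, p x = 1) (e : κ ↪ ι) (G : κ → α → R) :
    ∑ ω : ι → α, (∏ m, p (ω m)) * ∏ j, G j (ω (e j)) = ∏ j, ∑ x, p x * G j x := by
  classical
  set G' : ι → α → R := Function.extend e G 1
  have hG' : ∀ j, G' (e j) = G j := e.injective.extend_apply G 1
  simpa only [prod_map, hG'] using sum_prod_mul_prod_finset hp (univ.map e) G'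

theorem sum_prod_mul_boole_forall (hp : ∑ x, p x = 1) (e : κ ↪ ι) (P : κ → α → Prop)
    [∀ j, DecidablePred (P j)] :
    ∑ ω : ι → α, (∏ m, p (ω m)) * (if ∀ j, P j (ω (e j)) then 1 else 0)
      = ∏ j, ∑ x ∈ univ.filter (P j), p x := by
  simpa only [Fintype.prod_boole, mul_boole, ← sum_filter] using
    sum_prod_mul_prod_embedding hp e fun j x => if P j x then 1 else 0

end ProductWeight

section SiteLaw

variable {σ R : Type*} [CommSemiring R] (π : σ → R) (M : Matrix σ σ R)

/-- The joint law of a site pair `(S₁(i), S₂(i))`. -/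
def siteLaw (x : σ × σ) : R := π x.1 * M x.1 x.2

variable [Fintype σ]

theorem sum_siteLaw_eq_one (hM : ∀ w, ∑ u, M w u = 1) (hπ : ∑ w, π w = 1) :
    ∑ x : σ × σ, siteLaw π M x = 1 := by
  simp [siteLaw, Fintype.sum_prod_type, ← mul_sum, hM, hπ]

theorem sum_siteLaw_fst_eq [DecidableEq σ] (hM : ∀ w, ∑ u, M w u = 1) (w : σ) :
    ∑ x ∈ univ.filter (fun x : σ × σ => x.1 = w), siteLaw π M x = π w := by
  simp [siteLaw, sum_filter, Fintype.sum_prod_type, ← mul_sum, hM]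

theorem sum_siteLaw_snd_eq [DecidableEq σ] (hstat : ∀ u, ∑ w, π w * M w u = π u) (u : σ) :
    ∑ x ∈ univ.filter (fun x : σ × σ => x.2 = u), siteLaw π M x = π u := by
  simp [siteLaw, sum_filter, Fintype.sum_prod_type, hstat]

theorem sum_siteLaw_diag_eq [DecidableEq σ] (w : σ) :
    ∑ x ∈ univ.filter (fun x : σ × σ => x.1 = w ∧ x.2 = w), siteLaw π M x
      = π w * M w w := by
  simp [siteLaw, sum_filter, Fintype.sum_prod_type, ite_and]

end SiteLaw

theorem Matrix.inv_diagonal_mul_transpose_diagonal_mul_apply_self {σ K : Type*} [Fintype σ]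
    [DecidableEq σ] [Field K] {π : σ → K} (hπ : ∀ w, π w ≠ 0) (M : Matrix σ σ K) (w : σ) :
    ((diagonal π)⁻¹ * (diagonal π * M)ᵀ) w w = M w w := by
  have hinv : (diagonal π)⁻¹ = diagonal π⁻¹ :=
    inv_eq_left_inv (by simp [diagonal_mul_diagonal, hπ])
  simp only [hinv, transpose_mul, diagonal_transpose, diagonal_mul, Pi.inv_apply, mul_diagonal,
    transpose_apply]
  rw [mul_comm (M w w), inv_mul_cancel_left₀ (hπ w)]

theorem boole_sub_boole_sq {R : Type*} [CommRing R] (P Q : Prop) [Decidable P] [Decidable Q] :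
    ((if P then 1 else 0) - (if Q then 1 else 0) : R) ^ 2
      = (if P then 1 else 0) + (if Q then 1 else 0) - 2 * if P ∧ Q then 1 else 0 := by
  split_ifs <;> simp_all; norm_num

def windowEmb {n k : ℕ} (hkn : k ≤ n) (i : Fin (n - k + 1)) : Fin k ↪ Fin n where
  toFun j := ⟨i + j, by omega⟩
  inj' _ _ h := Fin.ext (by simpa using h)

theorem kmer_single_position_variance
    (L k n : ℕ) (hkn : k ≤ n)
    (M : Matrix (Fin L) (Fin L) ℝ)
    (hM1 : ∀ w, ∑ u, M w u = 1)
    (π : Fin L → ℝ)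
    (hπ0 : ∀ w, 0 < π w)
    (hπ1 : ∑ w, π w = 1)
    (hstat : ∀ u, ∑ w, π w * M w u = π u)
    (N : Matrix (Fin L) (Fin L) ℝ)
    (hN : N = (Matrix.diagonal π)⁻¹ * (Matrix.diagonal π * M).transpose)
    (prob : (Fin n → Fin L × Fin L) → ℝ)
    (hprob : ∀ ω, prob ω = ∏ i, π (ω i).1 * M (ω i).1 (ω i).2)
    (E : ((Fin n → Fin L × Fin L) → ℝ) → ℝ)
    (hE : ∀ f, E f = ∑ ω, prob ω * f ω)
    (Var : ((Fin n → Fin L × Fin L) → ℝ) → ℝ)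
    (hVar : ∀ f, Var f = E (fun ω => (f ω - E f) ^ 2))
    (Z : Fin (n - k + 1) → (Fin k → Fin L) → (Fin n → Fin L × Fin L) → ℝ)
    (hZ : ∀ m W ω, Z m W ω =
      (if ∀ j : Fin k, (ω ⟨m.1 + j.1, by have := m.2; have := j.2; omega⟩).1 = W j
        then 1 else 0)
      - (if ∀ j : Fin k, (ω ⟨m.1 + j.1, by have := m.2; have := j.2; omega⟩).2 = W j
        then 1 else 0))
    (i : Fin (n - k + 1)) (W : Fin k → Fin L) :
    Var (Z i W) = E (fun ω => (Z i W ω) ^ 2)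
    ∧ E (fun ω => (Z i W ω) ^ 2)
        = (∏ j, π (W j)) * (2 - ∏ j, M (W j) (W j) - ∏ j, N (W j) (W j)) := by
  set e := windowEmb hkn i
  have hcyl : ∀ (P : Fin k → Fin L × Fin L → Prop) [∀ j, DecidablePred (P j)],
      E (fun ω => if ∀ j, P j (ω (e j)) then 1 else 0)
        = ∏ j, ∑ x ∈ univ.filter (P j), siteLaw π M x := fun P _ => by
    simp only [hE, hprob]
    convert sum_prod_mul_boole_forall (sum_siteLaw_eq_one π M hM1 hπ1) e P
    rfl
  set X₁ : (Fin n → Fin L × Fin L) → ℝ := fun ω => if ∀ j, (ω (e j)).1 = W j then 1 else 0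
  set X₂ : (Fin n → Fin L × Fin L) → ℝ := fun ω => if ∀ j, (ω (e j)).2 = W j then 1 else 0
  set X₁₂ : (Fin n → Fin L × Fin L) → ℝ :=
    fun ω => if ∀ j, (ω (e j)).1 = W j ∧ (ω (e j)).2 = W j then 1 else 0
  have hX₁ : E X₁ = ∏ j, π (W j) :=
    (hcyl _).trans (prod_congr rfl fun j _ => sum_siteLaw_fst_eq π M hM1 (W j))
  have hX₂ : E X₂ = ∏ j, π (W j) :=
    (hcyl _).trans (prod_congr rfl fun j _ => sum_siteLaw_snd_eq π M hstat (W j))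
  have hX₁₂ : E X₁₂ = ∏ j, π (W j) * M (W j) (W j) :=
    (hcyl _).trans (prod_congr rfl fun j _ => sum_siteLaw_diag_eq π M (W j))
  have hZe : Z i W = X₁ - X₂ := funext (hZ i W)
  have hZsq : ∀ ω, Z i W ω ^ 2 = X₁ ω + X₂ ω - 2 * X₁₂ ω := fun ω => by
    simp [hZe, X₁, X₂, X₁₂, boole_sub_boole_sq, forall_and]
  have hmean : E (Z i W) = 0 := by
    have hlin : E (Z i W) = E X₁ - E X₂ := by
      simp only [hE, hZe, Pi.sub_apply, mul_sub, sum_sub_distrib]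
    rw [hlin, hX₁, hX₂, sub_self]
  have hNM : ∏ j, N (W j) (W j) = ∏ j, M (W j) (W j) := by
    simp only [hN, inv_diagonal_mul_transpose_diagonal_mul_apply_self fun w => (hπ0 w).ne']
  refine ⟨by simp only [hVar, hmean, sub_zero], ?_⟩
  have hlin : E (fun ω => Z i W ω ^ 2) = E X₁ + E X₂ - 2 * E X₁₂ := by
    simp only [hE, hZsq, mul_add, mul_sub, sum_add_distrib, sum_sub_distrib,
      mul_left_comm _ (2 : ℝ), ← mul_sum]
  rw [hlin, hX₁, hX₂, hX₁₂, prod_mul_distrib, hNM]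
  ring
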